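/- arXiv:2511.16793 — 3 statements merged into one kernel-verified Lean document; each statement's English description precedes it below -/
import Mathlib

section
/- Let 0 < q < 1/2 < p < 1 and v ∈ (0,1), and define ρ̄(v,p) = (1-v)(1-q) / ((1-v)(1-q) + (1+v)(1-p)). The mixed partial derivative ∂²ρ̄/∂v∂p is negative when v > (p-q)/(2-p-q) and nonnegative when 0 < v ≤ (p-q)/(2-p-q). -/
theorem stmt_5 (p q v : ℝ)
    (hq : 0 < q) (hqp : q < 1/2) (hp : 1/2 < p) (hp1 : p < 1)
    (hv : v ∈ Set.Ioo (0:ℝ) 1) :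
    (v > (p-q)/(2-p-q) →
      deriv (fun v' : ℝ => deriv (fun p' : ℝ =>
        (1-v')*(1-q) / ((1-v')*(1-q) + (1+v')*(1-p'))) p) v < 0) ∧
    (v ≤ (p-q)/(2-p-q) →
      0 ≤ deriv (fun v' : ℝ => deriv (fun p' : ℝ =>
        (1-v')*(1-q) / ((1-v')*(1-q) + (1+v')*(1-p'))) p) v) := by
  obtain ⟨hv0, hv1⟩ := hv
  have hq1 : q < 1 := by linarith
  have hDpos : ∀ v' ∈ Set.Ioo (-1:ℝ) 1, 0 < (1-v')*(1-q)+(1+v')*(1-p) := by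
    intro v' hv'
    obtain ⟨h1, h2⟩ := hv'
    nlinarith
  -- inner derivative formula
  have hinner : ∀ v' ∈ Set.Ioo (-1:ℝ) 1,
      deriv (fun p' : ℝ => (1-v')*(1-q) / ((1-v')*(1-q) + (1+v')*(1-p'))) p
        = (1-v')*(1-q)*(1+v') / ((1-v')*(1-q)+(1+v')*(1-p))^2 := by
    intro v' hv'
    have hD := hDpos v' hv'
    have hden : HasDerivAt (fun p' : ℝ => (1-v')*(1-q) + (1+v')*(1-p')) (-(1+v')) p := by
      have h0 : HasDerivAt (fun p' : ℝ => (1-p')) (-1) p := by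
        simpa using (hasDerivAt_id p).const_sub 1
      have h1 : HasDerivAt (fun p' : ℝ => (1+v')*(1-p')) ((1+v')*(-1)) p :=
        h0.const_mul (1+v')
      have := h1.const_add ((1-v')*(1-q))
      simpa using this
    have h := (hasDerivAt_const p ((1-v')*(1-q))).div hden hD.ne'
    rw [show (fun p' : ℝ => (1-v')*(1-q) / ((1-v')*(1-q) + (1+v')*(1-p'))) = ((fun _ : ℝ => (1-v')*(1-q)) / fun p' : ℝ => (1-v')*(1-q) + (1+v')*(1-p')) from rfl, h.deriv]
    field_simp
    ring
  -- the outer function eventually equals g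
  set g : ℝ → ℝ := fun v' =>
    (1-v')*(1-q)*(1+v') / ((1-v')*(1-q)+(1+v')*(1-p))^2 with hg
  have heq : (fun v' : ℝ => deriv (fun p' : ℝ =>
      (1-v')*(1-q) / ((1-v')*(1-q) + (1+v')*(1-p'))) p) =ᶠ[nhds v] g := by
    filter_upwards [Ioo_mem_nhds (by linarith : (-1:ℝ) < v) hv1] with v' hv'
    exact hinner v' hv'
  have hD := hDpos v ⟨by linarith, hv1⟩
  -- derivative of g at v
  have h1 : HasDerivAt (fun v' : ℝ => (1-v')) (-1) v := by
    simpa using (hasDerivAt_id v).const_sub 1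
  have h2 : HasDerivAt (fun v' : ℝ => (1+v')) 1 v := by
    simpa using (hasDerivAt_id v).const_add 1
  have hnum : HasDerivAt (fun v' : ℝ => (1-v')*(1-q)*(1+v'))
      ((-1*(1-q))*(1+v) + ((1-v)*(1-q))*1) v :=
    (h1.mul_const (1-q)).mul h2
  have hden0 : HasDerivAt (fun v' : ℝ => (1-v')*(1-q)+(1+v')*(1-p))
      (-1*(1-q) + 1*(1-p)) v :=
    (h1.mul_const (1-q)).add (h2.mul_const (1-p))
  have hden2 : HasDerivAt (fun v' : ℝ => ((1-v')*(1-q)+(1+v')*(1-p))^2)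
      (2 * ((1-v)*(1-q)+(1+v)*(1-p))^1 * (-1*(1-q) + 1*(1-p))) v := hden0.pow 2
  have hden2ne : ((1-v)*(1-q)+(1+v)*(1-p))^2 ≠ 0 := pow_ne_zero 2 hD.ne'
  have hgd := (hnum.div hden2 hden2ne)
  have hderiv : deriv g v =
      (((-1*(1-q))*(1+v) + ((1-v)*(1-q))*1) * ((1-v)*(1-q)+(1+v)*(1-p))^2
        - (1-v)*(1-q)*(1+v) * (2 * ((1-v)*(1-q)+(1+v)*(1-p))^1 * (-1*(1-q) + 1*(1-p))))
      / (((1-v)*(1-q)+(1+v)*(1-p))^2)^2 := hgd.deriv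
  have hkey : deriv g v =
      (-2*(1-q)*((1+v)*(1-p)-(1-v)*(1-q))) / ((1-v)*(1-q)+(1+v)*(1-p))^3 := by
    rw [hderiv]
    field_simp
    ring
  have hderivEq : deriv (fun v' : ℝ => deriv (fun p' : ℝ =>
      (1-v')*(1-q) / ((1-v')*(1-q) + (1+v')*(1-p'))) p) v = deriv g v :=
    heq.deriv_eq
  have hcube : 0 < ((1-v)*(1-q)+(1+v)*(1-p))^3 := by positivity
  have h2pq : 0 < 2 - p - q := by linarith
  constructor
  · intro hgt
    rw [hderivEq, hkey]
    apply div_neg_of_neg_of_pos _ hcube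
    have : p - q < v * (2-p-q) := by
      rw [gt_iff_lt, div_lt_iff₀ h2pq] at hgt
      linarith [hgt]
    nlinarith
  · intro hle
    rw [hderivEq, hkey]
    apply div_nonneg _ hcube.le
    have : v * (2-p-q) ≤ p - q := by
      exact (le_div_iff₀ h2pq).mp hle
    nlinarith
end

section
/- Let 0 < q < 1/2 < p < 1, k ∈ (0,1), ρ₁ ∈ (0,1). Define the biased posteriors ρ₂ᵏ(1) = (k·ρ₁ + (1-k)·p·ρ₁) / (k·ρ₁ + (1-k)·p·ρ₁ + k·(1-ρ₁) + (1-k)·q·(1-ρ₁)) and ρ₂ᵏ(0) analogously with (1-p) and (1-q). Then ρ₂(0) < ρ₂ᵏ(0) < ρ₁ < ρ₂ᵏ(1) < ρ₂(1), where ρ₂(s) denotes the unbiased (k=0) Bayesian posteriors. -/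
theorem stmt_15 (p q k ρ₁ : ℝ)
    (hq : 0 < q) (hqp : q < 1/2) (hp : 1/2 < p) (hp1 : p < 1)
    (hk : k ∈ Set.Ioo (0:ℝ) 1) (hρ : ρ₁ ∈ Set.Ioo (0:ℝ) 1) :
    (1-p)*ρ₁ / ((1-p)*ρ₁ + (1-q)*(1-ρ₁)) <
      (k*ρ₁ + (1-k)*(1-p)*ρ₁) /
        (k*ρ₁ + (1-k)*(1-p)*ρ₁ + k*(1-ρ₁) + (1-k)*(1-q)*(1-ρ₁)) ∧
    (k*ρ₁ + (1-k)*(1-p)*ρ₁) /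
        (k*ρ₁ + (1-k)*(1-p)*ρ₁ + k*(1-ρ₁) + (1-k)*(1-q)*(1-ρ₁)) < ρ₁ ∧
    ρ₁ < (k*ρ₁ + (1-k)*p*ρ₁) /
        (k*ρ₁ + (1-k)*p*ρ₁ + k*(1-ρ₁) + (1-k)*q*(1-ρ₁)) ∧
    (k*ρ₁ + (1-k)*p*ρ₁) /
        (k*ρ₁ + (1-k)*p*ρ₁ + k*(1-ρ₁) + (1-k)*q*(1-ρ₁)) <
      p*ρ₁ / (p*ρ₁ + q*(1-ρ₁)) := by
  obtain ⟨hk0, hk1⟩ := hk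
  obtain ⟨hρ0, hρ1⟩ := hρ
  have h1ρ : 0 < 1 - ρ₁ := by linarith
  have h1k : 0 < 1 - k := by linarith
  have hd1 : 0 < (1-p)*ρ₁ + (1-q)*(1-ρ₁) := by nlinarith
  have hd2 : 0 < k*ρ₁ + (1-k)*(1-p)*ρ₁ + k*(1-ρ₁) + (1-k)*(1-q)*(1-ρ₁) := by nlinarith
  have hd3 : 0 < k*ρ₁ + (1-k)*p*ρ₁ + k*(1-ρ₁) + (1-k)*q*(1-ρ₁) := by nlinarith
  have hd4 : 0 < p*ρ₁ + q*(1-ρ₁) := by nlinarith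
  refine ⟨?_, ?_, ?_, ?_⟩
  · rw [div_lt_div_iff₀ hd1 hd2]; nlinarith [mul_pos (mul_pos hk0 h1ρ) (mul_pos hρ0 (by linarith : (0:ℝ) < p - q))]
  · rw [div_lt_iff₀ hd2]; nlinarith [mul_pos (mul_pos h1k h1ρ) (mul_pos hρ0 (by linarith : (0:ℝ) < p - q))]
  · rw [lt_div_iff₀ hd3]; nlinarith [mul_pos (mul_pos h1k h1ρ) (mul_pos hρ0 (by linarith : (0:ℝ) < p - q))]
  · rw [div_lt_div_iff₀ hd3 hd4]; nlinarith [mul_pos (mul_pos hk0 h1ρ) (mul_pos hρ0 (by linarith : (0:ℝ) < p - q))]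
end

section
/- Let 0 < q < 1/2 < p < 1, v ∈ [0,1), k ∈ (0,1), and ρ₀ ∈ (0,1) with Λ := ((1+v)/(1-v))·(ρ₀/(1-ρ₀)) ≤ (q + k(1-q))/(p + k(1-p)). Define R(k) = (Λ·(p + k(1-p))/(q + k(1-q)) - k)/(1-k). Then ∂R/∂k ≤ 0. -/
theorem stmt_16 (p q v k ρ₀ : ℝ)
    (hq : 0 < q) (hqp : q < 1/2) (hp : 1/2 < p) (hp1 : p < 1)
    (hv : v ∈ Set.Ico (0:ℝ) 1) (hk : k ∈ Set.Ioo (0:ℝ) 1)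
    (hρ : ρ₀ ∈ Set.Ioo (0:ℝ) 1)
    (hΛ : ((1+v)/(1-v)) * (ρ₀/(1-ρ₀)) ≤ (q + k*(1-q)) / (p + k*(1-p))) :
    deriv (fun k' : ℝ =>
      (((1+v)/(1-v)) * (ρ₀/(1-ρ₀)) * (p + k'*(1-p)) / (q + k'*(1-q)) - k') /
        (1 - k')) k ≤ 0 := by
  obtain ⟨hk0, hk1⟩ := hk
  obtain ⟨hv0, hv1⟩ := hv
  obtain ⟨hρ0, hρ1⟩ := hρ
  set L : ℝ := ((1+v)/(1-v)) * (ρ₀/(1-ρ₀)) with hLdef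
  have hL : 0 < L := by
    apply mul_pos <;> apply div_pos <;> linarith
  have hB : 0 < q + k*(1-q) := by nlinarith
  have hA : 0 < p + k*(1-p) := by nlinarith
  have h1k : 0 < 1 - k := by linarith
  have key : L * (p + k*(1-p)) ≤ q + k*(1-q) := (le_div_iff₀ hA).mp hΛ
  -- derivative computation
  have hAk : HasDerivAt (fun k' : ℝ => L * (p + k'*(1-p))) (L*(1-p)) k := by
    have : HasDerivAt (fun k' : ℝ => p + k'*(1-p)) (1-p) k := by
      simpa using ((hasDerivAt_id k).mul_const (1-p)).const_add p
    simpa using this.const_mul L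
  have hBk : HasDerivAt (fun k' : ℝ => q + k'*(1-q)) (1-q) k := by
    simpa using ((hasDerivAt_id k).mul_const (1-q)).const_add q
  have hu : HasDerivAt (fun k' : ℝ => L * (p + k'*(1-p)) / (q + k'*(1-q)) - k')
      ((L*(1-p)*(q + k*(1-q)) - L*(p + k*(1-p))*(1-q))/(q + k*(1-q))^2 - 1) k := by
    simpa using (hAk.fun_div hBk hB.ne').fun_sub (hasDerivAt_id' k)
  have hden : HasDerivAt (fun k' : ℝ => 1 - k') (-1) k := by
    simpa using (hasDerivAt_id k).const_sub 1
  have hd := hu.fun_div hden (by linarith : (1:ℝ) - k ≠ 0)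
  rw [hd.deriv]
  apply div_nonpos_of_nonpos_of_nonneg _ (sq_nonneg _)
  have hB2 : (0:ℝ) < (q + k*(1-q))^2 := pow_pos hB 2
  have expand : ((L*(1-p)*(q + k*(1-q)) - L*(p + k*(1-p))*(1-q))/(q + k*(1-q))^2 - 1) * (1 - k) -
      (L * (p + k*(1-p)) / (q + k*(1-q)) - k) * (-1)
      = (L*(q-p)*(1-k) + L*(p + k*(1-p))*(q + k*(1-q)) - (q + k*(1-q))^2)
        / (q + k*(1-q))^2 := by
    field_simp
    ring
  rw [expand]
  apply div_nonpos_of_nonpos_of_nonneg _ (le_of_lt hB2)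
  nlinarith [mul_le_mul_of_nonneg_right key hB.le, mul_pos hL h1k]
end
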